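/- (Theorem 1, forward direction.) Let c > 0, let W : E → E be a linear isometry, and let b ∈ E with c·‖b‖² < 1. Then the feature transformation T(x) = b ⊕_c (W x) is an isometry of the Poincaré ball: for all x, y ∈ E with c·‖x‖² < 1 and c·‖y‖² < 1, d_c(T x, T y) = d_c(x, y). -/

import Mathlib

open scoped RealInnerProductSpace

variable {E : Type*} [NormedAddCommGroup E] [InnerProductSpace ℝ E] [FiniteDimensional ℝ E]

/-- Möbius addition on the Poincaré ball of curvature `-c`. -/
noncomputable def mobiusAdd (c : ℝ) (x y : E) : E :=
  (1 / (1 + 2 * c * ⟪x, y⟫ + c ^ 2 * ‖x‖ ^ 2 * ‖y‖ ^ 2)) •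
    ((1 + 2 * c * ⟪x, y⟫ + c * ‖y‖ ^ 2) • x + (1 - c * ‖x‖ ^ 2) • y)

/-- Inverse hyperbolic tangent. -/
noncomputable def artanh (t : ℝ) : ℝ := (1 / 2) * Real.log ((1 + t) / (1 - t))

/-- Hyperbolic distance on the Poincaré ball of curvature `-c`. -/
noncomputable def hypDist (c : ℝ) (x y : E) : ℝ :=
  (2 / Real.sqrt c) * artanh (Real.sqrt c * ‖mobiusAdd c (-x) y‖)

/-!
A Möbius translation `u ↦ b ⊕_c u` multiplies `‖u - v‖²` by `(1 - c‖b‖²)² / (D(b,u) D(b,v))`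
and each factor `1 - c‖u‖²` by `(1 - c‖b‖²) / D(b,u)`, where `D` is the denominator of `⊕_c`.
Hence it preserves `δ(u,v) = ‖u - v‖² / ((1 - c‖u‖²)(1 - c‖v‖²))`, as does a linear isometry,
and `d_c` is a function of `δ` alone because `‖(-x) ⊕_c y‖² = δ / (1 + c δ)`.
-/

namespace PoincareBall

variable {F : Type*} [NormedAddCommGroup F] [InnerProductSpace ℝ F]

noncomputable def mobiusDenom (c : ℝ) (x y : F) : ℝ :=
  1 + 2 * c * ⟪x, y⟫ + c ^ 2 * ‖x‖ ^ 2 * ‖y‖ ^ 2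

noncomputable def mobiusNumer (c : ℝ) (x y : F) : F :=
  (1 + 2 * c * ⟪x, y⟫ + c * ‖y‖ ^ 2) • x + (1 - c * ‖x‖ ^ 2) • y

/-- `cosh (√c · hypDist c x y) = 1 + 2c · poincareInvariant c x y`. -/
noncomputable def poincareInvariant (c : ℝ) (x y : F) : ℝ :=
  ‖x - y‖ ^ 2 / ((1 - c * ‖x‖ ^ 2) * (1 - c * ‖y‖ ^ 2))

theorem mobiusAdd_eq_inv_smul (c : ℝ) (x y : F) :
    mobiusAdd c x y = (mobiusDenom c x y)⁻¹ • mobiusNumer c x y := by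
  rw [mobiusAdd, one_div, mobiusDenom, mobiusNumer]

theorem mobiusDenom_eq (c : ℝ) (x y : F) :
    mobiusDenom c x y = c * ‖x + y‖ ^ 2 + (1 - c * ‖x‖ ^ 2) * (1 - c * ‖y‖ ^ 2) := by
  rw [mobiusDenom, norm_add_sq_real]
  ring

theorem mobiusDenom_pos {c : ℝ} (hc : 0 ≤ c) {x y : F} (hx : c * ‖x‖ ^ 2 < 1)
    (hy : c * ‖y‖ ^ 2 < 1) : 0 < mobiusDenom c x y := by
  rw [mobiusDenom_eq]
  have := mul_pos (sub_pos.2 hx) (sub_pos.2 hy)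
  positivity

theorem inner_mobiusNumer (c : ℝ) (x y z : F) :
    ⟪mobiusNumer c x y, mobiusNumer c x z⟫ =
      (1 + 2 * c * ⟪x, y⟫ + c * ‖y‖ ^ 2) * (1 + 2 * c * ⟪x, z⟫ + c * ‖z‖ ^ 2) * ‖x‖ ^ 2
        + (1 + 2 * c * ⟪x, y⟫ + c * ‖y‖ ^ 2) * (1 - c * ‖x‖ ^ 2) * ⟪x, z⟫
        + (1 + 2 * c * ⟪x, z⟫ + c * ‖z‖ ^ 2) * (1 - c * ‖x‖ ^ 2) * ⟪x, y⟫
        + (1 - c * ‖x‖ ^ 2) ^ 2 * ⟪y, z⟫ := by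
  simp only [mobiusNumer, inner_add_left, inner_add_right, real_inner_smul_left,
    real_inner_smul_right, real_inner_self_eq_norm_sq, real_inner_comm x y]
  ring

theorem inner_mobiusAdd_mul {c : ℝ} {x y z : F} (hy : mobiusDenom c x y ≠ 0)
    (hz : mobiusDenom c x z ≠ 0) :
    ⟪mobiusAdd c x y, mobiusAdd c x z⟫ * (mobiusDenom c x y * mobiusDenom c x z) =
      ⟪mobiusNumer c x y, mobiusNumer c x z⟫ := by
  rw [mobiusAdd_eq_inv_smul, mobiusAdd_eq_inv_smul, real_inner_smul_left, real_inner_smul_right]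
  field_simp

theorem norm_mobiusAdd_sq_mul {c : ℝ} {x y : F} (hD : mobiusDenom c x y ≠ 0) :
    ‖mobiusAdd c x y‖ ^ 2 * mobiusDenom c x y = ‖x + y‖ ^ 2 := by
  have h := inner_mobiusAdd_mul hD hD
  rw [inner_mobiusNumer, real_inner_self_eq_norm_sq, real_inner_self_eq_norm_sq] at h
  refine mul_right_cancel₀ hD ?_
  rw [norm_add_sq_real]
  unfold mobiusDenom at h ⊢
  linear_combination h

theorem one_sub_norm_mobiusAdd_sq_mul {c : ℝ} {x y : F} (hD : mobiusDenom c x y ≠ 0) :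
    (1 - c * ‖mobiusAdd c x y‖ ^ 2) * mobiusDenom c x y =
      (1 - c * ‖x‖ ^ 2) * (1 - c * ‖y‖ ^ 2) := by
  linear_combination (-c) * norm_mobiusAdd_sq_mul hD + mobiusDenom_eq c x y

theorem mul_norm_mobiusAdd_sq_lt_one {c : ℝ} (hc : 0 ≤ c) {x y : F} (hx : c * ‖x‖ ^ 2 < 1)
    (hy : c * ‖y‖ ^ 2 < 1) : c * ‖mobiusAdd c x y‖ ^ 2 < 1 := by
  have hD := mobiusDenom_pos hc hx hy
  have h : 0 < (1 - c * ‖mobiusAdd c x y‖ ^ 2) * mobiusDenom c x y := by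
    rw [one_sub_norm_mobiusAdd_sq_mul hD.ne']
    exact mul_pos (sub_pos.2 hx) (sub_pos.2 hy)
  exact sub_pos.1 ((pos_iff_pos_of_mul_pos h).2 hD)

theorem norm_mobiusAdd_sub_mobiusAdd_sq_mul {c : ℝ} {x y z : F} (hy : mobiusDenom c x y ≠ 0)
    (hz : mobiusDenom c x z ≠ 0) :
    ‖mobiusAdd c x y - mobiusAdd c x z‖ ^ 2 * (mobiusDenom c x y * mobiusDenom c x z) =
      (1 - c * ‖x‖ ^ 2) ^ 2 * ‖y - z‖ ^ 2 := by
  have hyz := inner_mobiusAdd_mul hy hz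
  rw [inner_mobiusNumer] at hyz
  rw [norm_sub_sq_real, norm_sub_sq_real]
  linear_combination (norm := skip) mobiusDenom c x z * norm_mobiusAdd_sq_mul hy - 2 * hyz
    + mobiusDenom c x y * norm_mobiusAdd_sq_mul hz
  simp only [mobiusDenom, norm_add_sq_real]
  ring

theorem poincareInvariant_mobiusAdd_left {c : ℝ} (hc : 0 ≤ c) {x y z : F}
    (hx : c * ‖x‖ ^ 2 < 1) (hy : c * ‖y‖ ^ 2 < 1) (hz : c * ‖z‖ ^ 2 < 1) :
    poincareInvariant c (mobiusAdd c x y) (mobiusAdd c x z) = poincareInvariant c y z := by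
  have hDy := (mobiusDenom_pos hc hx hy).ne'
  have hDz := (mobiusDenom_pos hc hx hz).ne'
  unfold poincareInvariant
  rw [div_eq_div_iff (mul_pos (sub_pos.2 (mul_norm_mobiusAdd_sq_lt_one hc hx hy))
    (sub_pos.2 (mul_norm_mobiusAdd_sq_lt_one hc hx hz))).ne'
    (mul_pos (sub_pos.2 hy) (sub_pos.2 hz)).ne']
  refine mul_right_cancel₀ (mul_ne_zero hDy hDz) ?_
  linear_combination
    (1 - c * ‖y‖ ^ 2) * (1 - c * ‖z‖ ^ 2) * norm_mobiusAdd_sub_mobiusAdd_sq_mul hDy hDz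
    - ‖y - z‖ ^ 2 * ((1 - c * ‖mobiusAdd c x z‖ ^ 2) * mobiusDenom c x z *
        one_sub_norm_mobiusAdd_sq_mul hDy
      + (1 - c * ‖x‖ ^ 2) * (1 - c * ‖y‖ ^ 2) * one_sub_norm_mobiusAdd_sq_mul hDz)

theorem poincareInvariant_map {c : ℝ} {G : Type*} [NormedAddCommGroup G] [InnerProductSpace ℝ G]
    (W : F →ₗᵢ[ℝ] G) (x y : F) : poincareInvariant c (W x) (W y) = poincareInvariant c x y := by
  simp only [poincareInvariant, ← map_sub, LinearIsometry.norm_map]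

theorem norm_neg_mobiusAdd_sq {c : ℝ} (hc : 0 ≤ c) {x y : F} (hx : c * ‖x‖ ^ 2 < 1)
    (hy : c * ‖y‖ ^ 2 < 1) :
    ‖mobiusAdd c (-x) y‖ ^ 2 = poincareInvariant c x y / (1 + c * poincareInvariant c x y) := by
  have hP := mul_pos (sub_pos.2 hx) (sub_pos.2 hy)
  have hD := mobiusDenom_pos hc (x := -x) (by rwa [norm_neg]) hy
  have h := norm_mobiusAdd_sq_mul hD.ne'
  rw [mobiusDenom_eq, norm_neg, neg_add_eq_sub, ← norm_sub_rev] at hD h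
  rw [poincareInvariant]
  generalize (1 - c * ‖x‖ ^ 2) * (1 - c * ‖y‖ ^ 2) = P at *
  field_simp
  linear_combination h

end PoincareBall

open PoincareBall

theorem featureTransformation_isometry (c : ℝ) (hc : 0 < c)
    (W : E →ₗᵢ[ℝ] E) (b : E) (hb : c * ‖b‖ ^ 2 < 1) (x y : E)
    (hx : c * ‖x‖ ^ 2 < 1) (hy : c * ‖y‖ ^ 2 < 1) :
    hypDist c (mobiusAdd c b (W x)) (mobiusAdd c b (W y)) = hypDist c x y := by
  have hWx : c * ‖W x‖ ^ 2 < 1 := by rwa [W.norm_map]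
  have hWy : c * ‖W y‖ ^ 2 < 1 := by rwa [W.norm_map]
  have hnorm : ‖mobiusAdd c (-mobiusAdd c b (W x)) (mobiusAdd c b (W y))‖
      = ‖mobiusAdd c (-x) y‖ := by
    rw [← sq_eq_sq₀ (norm_nonneg _) (norm_nonneg _),
      norm_neg_mobiusAdd_sq hc.le (mul_norm_mobiusAdd_sq_lt_one hc.le hb hWx)
        (mul_norm_mobiusAdd_sq_lt_one hc.le hb hWy),
      norm_neg_mobiusAdd_sq hc.le hx hy, poincareInvariant_mobiusAdd_left hc.le hb hWx hWy,
      poincareInvariant_map]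
  rw [hypDist, hypDist, hnorm]
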